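/- Tail additive bound: under the spectral sandwich (1−ε)CCᵀ − (ε/k)‖A−A_k‖_F²·I ⪯ AAᵀ ⪯ (1+ε)CCᵀ + (ε/k)‖A−A_k‖_F²·I with ε ≤ 1/2, and with m, P_{∖m} = I − P_m defined as before (so every vector in the range of P_{∖m} has Rayleigh quotient xᵀAAᵀx ≤ (‖A−A_k‖_F²/k)xᵀx), it holds that P_{∖m}CCᵀP_{∖m} − (4ε/k)‖A−A_k‖_F²·I ⪯ A_{∖m}A_{∖m}ᵀ ⪯ P_{∖m}CCᵀP_{∖m} + (4ε/k)‖A−A_k‖_F²·I. -/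

import Mathlib

open Matrix BigOperators

noncomputable section

/-- Squared Frobenius norm. -/
def frob2 {m n : ℕ} (A : Matrix (Fin m) (Fin n) ℝ) : ℝ := ∑ i, ∑ j, (A i j) ^ 2

/-- `X` is an orthogonal projection of rank at most `k`. -/
def IsOrthProj {n : ℕ} (k : ℕ) (X : Matrix (Fin n) (Fin n) ℝ) : Prop :=
  Xᵀ = X ∧ X * X = X ∧ X.rank ≤ k

/-- `‖A - A_k‖_F²`, the squared Frobenius error of the best rank-`k` approximation,
characterized as the infimum over rank-`≤k` orthogonal projections. -/
def tailNorm2 {n d : ℕ} (k : ℕ) (A : Matrix (Fin n) (Fin d) ℝ) : ℝ :=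
  sInf { e | ∃ X : Matrix (Fin n) (Fin n) ℝ, IsOrthProj k X ∧ e = frob2 (A - X * A) }

/-- Moore–Penrose conditions. -/
def IsMoorePenrose {n : ℕ} (A P : Matrix (Fin n) (Fin n) ℝ) : Prop :=
  A * P * A = A ∧ P * A * P = P ∧ (A * P)ᵀ = A * P ∧ (P * A)ᵀ = P * A

/-- Moore–Penrose pseudoinverse. -/
def pinv {n : ℕ} (A : Matrix (Fin n) (Fin n) ℝ) : Matrix (Fin n) (Fin n) ℝ :=
  letI := Classical.propDecidable
  if h : ∃ P, IsMoorePenrose A P then h.choose else 0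

/-- Loewner (PSD) order. -/
def lle {n : ℕ} (M N : Matrix (Fin n) (Fin n) ℝ) : Prop := (N - M).PosSemidef

/-- `i`-th column of a matrix. -/
def col {n d : ℕ} (A : Matrix (Fin n) (Fin d) ℝ) (i : Fin d) : Fin n → ℝ := fun r => A r i

/-- Ridge leverage score `τ̄_i(A) = aᵢᵀ (A Aᵀ + (‖A-A_k‖_F²/k)·I)⁺ aᵢ`. -/
def ridgeScore {n d : ℕ} (k : ℕ) (A : Matrix (Fin n) (Fin d) ℝ) (i : Fin d) : ℝ :=
  _root_.col A i ⬝ᵥ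
    (pinv (A * Aᵀ + (tailNorm2 k A / (k : ℝ)) • (1 : Matrix (Fin n) (Fin n) ℝ)) *ᵥ _root_.col A i)
lemma Matrix.PosSemidef.smul_nonneg' {n : ℕ} {M : Matrix (Fin n) (Fin n) ℝ} (hM : M.PosSemidef)
    {c : ℝ} (hc : 0 ≤ c) : (c • M).PosSemidef := by
  refine ⟨?_, fun x => ?_⟩
  · unfold Matrix.IsHermitian
    rw [conjTranspose_smul, hM.1]; simp
  · have h := mul_nonneg hc (hM.2 x)
    simp only [Finsupp.mul_sum, smul_apply, smul_eq_mul, star_trivial] at h ⊢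
    exact h.trans_eq (Finsupp.sum_congr fun i _ => Finsupp.sum_congr fun j _ => by ring)

theorem tail_additive_bound {n d d' k : ℕ} (hk : 1 ≤ k)
    (A : Matrix (Fin n) (Fin d) ℝ) (C : Matrix (Fin n) (Fin d') ℝ)
    (eps : ℝ) (heps : 0 < eps) (heps2 : eps ≤ 1 / 2)
    (h1 : lle ((1 - eps) • (C * Cᵀ) -
        (eps / (k : ℝ) * tailNorm2 k A) • (1 : Matrix (Fin n) (Fin n) ℝ)) (A * Aᵀ))
    (h2 : lle (A * Aᵀ) ((1 + eps) • (C * Cᵀ) +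
        (eps / (k : ℝ) * tailNorm2 k A) • (1 : Matrix (Fin n) (Fin n) ℝ)))
    (P : Matrix (Fin n) (Fin n) ℝ) (hPsym : Pᵀ = P) (hPidem : P * P = P)
    (hPcomm : P * (A * Aᵀ) = (A * Aᵀ) * P)
    (htailP : lle ((1 - P) * (A * Aᵀ) * (1 - P)) ((tailNorm2 k A / (k : ℝ)) • (1 - P))) :
    lle ((1 - P) * (C * Cᵀ) * (1 - P) -
        (4 * eps / (k : ℝ) * tailNorm2 k A) • (1 : Matrix (Fin n) (Fin n) ℝ))
      ((1 - P) * (A * Aᵀ) * (1 - P)) ∧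
    lle ((1 - P) * (A * Aᵀ) * (1 - P))
      ((1 - P) * (C * Cᵀ) * (1 - P) +
        (4 * eps / (k : ℝ) * tailNorm2 k A) • (1 : Matrix (Fin n) (Fin n) ℝ)) := by
  classical
  unfold lle at *
  set T := tailNorm2 k A with hT
  have hT0 : 0 ≤ T := by
    apply Real.sInf_nonneg
    rintro e ⟨X, -, rfl⟩
    exact Finset.sum_nonneg fun i _ => Finset.sum_nonneg fun j _ => sq_nonneg _
  have hk0 : (0:ℝ) < k := by exact_mod_cast hk
  set t := T / (k:ℝ) with htdef
  have ht0 : 0 ≤ t := div_nonneg hT0 hk0.le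
  have he1 : (0:ℝ) < 1 - eps := by linarith
  set Q := (1 : Matrix (Fin n) (Fin n) ℝ) - P with hQdef
  have hQsym : Qᵀ = Q := by simp [hQdef, transpose_sub, hPsym]
  have hQidem : Q * Q = Q := by
    simp only [hQdef, Matrix.mul_sub, Matrix.sub_mul, Matrix.mul_one, Matrix.one_mul, hPidem]
    abel
  have hQH : Qᴴ = Q := by simpa using hQsym
  have hQpsd : Q.PosSemidef := by
    have := Matrix.posSemidef_conjTranspose_mul_self Q
    rwa [hQH, hQidem] at this
  have hPpsd : P.PosSemidef := by
    have := Matrix.posSemidef_conjTranspose_mul_self P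
    have hPH : Pᴴ = P := by simpa using hPsym
    rwa [hPH, hPidem] at this
  have hconj : ∀ M : Matrix (Fin n) (Fin n) ℝ, M.PosSemidef → (Q * M * Q).PosSemidef := by
    intro M hM
    have := hM.mul_mul_conjTranspose_same Q
    rwa [hQH] at this
  set X := Q * (A * Aᵀ) * Q with hX
  set Y := Q * (C * Cᵀ) * Q with hY
  have hs : eps / (k:ℝ) * T = eps * t := by rw [htdef]; ring
  have hE1 : (X + (eps * t) • Q - (1-eps) • Y).PosSemidef := by
    have := hconj _ h1
    have e : Q * ((A * Aᵀ) - ((1 - eps) • (C * Cᵀ) -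
        (eps / (k : ℝ) * T) • (1 : Matrix (Fin n) (Fin n) ℝ))) * Q
        = X + (eps * t) • Q - (1-eps) • Y := by
      rw [hs]
      simp only [Matrix.mul_sub, Matrix.sub_mul, Matrix.mul_one, Matrix.one_mul,
        Matrix.mul_smul, Matrix.smul_mul, hQidem, hX, hY]
      abel
    rwa [e] at this
  have hE2 : ((1+eps) • Y + (eps * t) • Q - X).PosSemidef := by
    have := hconj _ h2
    have e : Q * (((1 + eps) • (C * Cᵀ) +
        (eps / (k : ℝ) * T) • (1 : Matrix (Fin n) (Fin n) ℝ)) - A * Aᵀ) * Q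
        = (1+eps) • Y + (eps * t) • Q - X := by
      rw [hs]
      simp only [Matrix.mul_sub, Matrix.sub_mul, Matrix.mul_add, Matrix.add_mul,
        Matrix.mul_one, Matrix.one_mul, Matrix.mul_smul, Matrix.smul_mul, hQidem, hX, hY]
      skip
    rwa [e] at this
  have hE3 : (t • Q - X).PosSemidef := htailP
  have hP' : ((1 : Matrix (Fin n) (Fin n) ℝ) - Q).PosSemidef := by
    have e : (1 : Matrix (Fin n) (Fin n) ℝ) - Q = P := by rw [hQdef]; abel
    rwa [e]
  constructor
  · have key : X - (Y - (4 * eps / (k:ℝ) * T) • (1 : Matrix (Fin n) (Fin n) ℝ))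
        = (1/(1-eps)) • (X + (eps * t) • Q - (1-eps) • Y)
          + (eps/(1-eps)) • (t • Q - X)
          + (4*eps - 2*eps/(1-eps)) • (t • Q)
          + (4*eps*t) • ((1 : Matrix (Fin n) (Fin n) ℝ) - Q) := by
      rw [htdef]
      match_scalars <;> field_simp <;> ring
    rw [key]
    refine (((hE1.smul_nonneg' ?_).add (hE3.smul_nonneg' ?_)).add
      ((hQpsd.smul_nonneg' ht0).smul_nonneg' ?_)).add (hP'.smul_nonneg' ?_)
    · positivity
    · positivity
    · have : 2*eps/(1-eps) ≤ 4*eps := by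
        rw [div_le_iff₀ he1]; nlinarith
      linarith
    · positivity
  · have key : (Y + (4 * eps / (k:ℝ) * T) • (1 : Matrix (Fin n) (Fin n) ℝ)) - X
        = (eps/(1-eps)) • (X + (eps * t) • Q - (1-eps) • Y)
          + ((1+eps) • Y + (eps * t) • Q - X)
          + (eps/(1-eps)) • (t • Q - X)
          + (eps*(2-4*eps)/(1-eps)) • (t • Q)
          + (4*eps*t) • ((1 : Matrix (Fin n) (Fin n) ℝ) - Q) := by
      rw [htdef]
      match_scalars <;> field_simp <;> ring
    rw [key]
    refine ((((hE1.smul_nonneg' ?_).add hE2).add (hE3.smul_nonneg' ?_)).add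
      ((hQpsd.smul_nonneg' ht0).smul_nonneg' ?_)).add (hP'.smul_nonneg' ?_)
    · positivity
    · positivity
    · have h24 : 0 ≤ 2 - 4*eps := by linarith
      positivity
    · positivity
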